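/- (Theorem 7) For every real time t, the l₁-norm coherence of the evolved state, C₁(t) := Σ_{i≠j} |ρ(t)_{ij}| where ρ(t) = |ψ(t)⟩⟨ψ(t)|, equals 2|α(t)||β(t)| (hence equals the concurrence E(t)), and the battery capacity satisfies C_b(t) = 2 ω_b √(1 − C₁(t)²). -/

import Mathlib

open Complex Matrix ComplexConjugate

/-!
Since `ξ₁ ξ₂ = -1`, the vectors `(ξ₁, 1)` and `(ξ₂, 1)` are orthogonal, so the interference term
between the two phases drops out of `|α|² + |β|²`, which therefore equals
`(ξ₁² + ξ₂² + 2) / (ξ₁ - ξ₂)² = 1`. For a pure state the off-diagonal entries of `ρ` have moduli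
`|vᵢ| |vⱼ|`, giving `C₁ = 2 |α| |β|`; and on the unit circle `x² + y² = 1` one has
`(1 - 2x²)² = (x² + y²)² - 4x²y² = 1 - (2xy)²`, which turns the capacity into `2 ω_b √(1 - C₁²)`.
-/

noncomputable def l1Coherence {n : Type*} [Fintype n] [DecidableEq n] (ρ : Matrix n n ℂ) : ℝ :=
  ∑ i, ∑ j, if i ≠ j then ‖ρ i j‖ else 0

theorem Fintype.sum_ite_ne_eq_sub {n : Type*} [Fintype n] [DecidableEq n] (f : n → ℝ) (i : n) :
    ∑ j, (if i ≠ j then f j else 0) = ∑ j, f j - f i := by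
  simp [Finset.sum_ite, Finset.filter_ne]

theorem l1Coherence_vecMulVec_star {n : Type*} [Fintype n] [DecidableEq n] (v : n → ℂ) :
    l1Coherence (vecMulVec v (star v)) = (∑ i, ‖v i‖) ^ 2 - ∑ i, ‖v i‖ ^ 2 := by
  simp only [l1Coherence, vecMulVec_apply, Pi.star_apply, norm_mul, norm_star,
    Fintype.sum_ite_ne_eq_sub (fun j => _ * ‖v j‖), Finset.sum_sub_distrib, sq, Finset.sum_mul_sum]

theorem l1Coherence_singleExcitation (a b : ℂ) :
    l1Coherence (vecMulVec ![0, a, b, 0] (star ![0, a, b, 0])) = 2 * ‖a‖ * ‖b‖ := by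
  rw [l1Coherence_vecMulVec_star]
  simp [Fin.sum_univ_four]
  ring

theorem norm_sq_add_norm_sq_of_mul_eq_neg_one {u₁ u₂ : ℂ} {ξ₁ ξ₂ : ℝ}
    (hu₁ : ‖u₁‖ = 1) (hu₂ : ‖u₂‖ = 1) (hξ : ξ₁ * ξ₂ = -1) (hne : ξ₁ ≠ ξ₂) :
    ‖(u₁ * ξ₁ - u₂ * ξ₂) / (ξ₁ - ξ₂)‖ ^ 2 + ‖(u₁ - u₂) / (ξ₁ - ξ₂)‖ ^ 2 = 1 := by
  have hd : (ξ₁ : ℂ) - ξ₂ = ((ξ₁ - ξ₂ : ℝ) : ℂ) := by push_cast; ring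
  have hd0 : (ξ₁ - ξ₂) * (ξ₁ - ξ₂) ≠ 0 := mul_self_ne_zero.2 (sub_ne_zero.2 hne)
  have hn₁ : normSq u₁ = 1 := by rw [normSq_eq_norm_sq, hu₁, one_pow]
  have hn₂ : normSq u₂ = 1 := by rw [normSq_eq_norm_sq, hu₂, one_pow]
  have hcross : (u₁ * ξ₁ * conj (u₂ * ξ₂)).re = ξ₁ * ξ₂ * (u₁ * conj u₂).re := by
    rw [map_mul, conj_ofReal, show u₁ * ξ₁ * (conj u₂ * ξ₂) = u₁ * conj u₂ * ((ξ₁ * ξ₂ : ℝ) : ℂ) by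
      push_cast; ring, re_mul_ofReal]
    ring
  simp only [← normSq_eq_norm_sq]
  rw [hd, normSq_div, normSq_div, normSq_sub, normSq_sub, normSq_mul, normSq_mul, normSq_ofReal,
    normSq_ofReal, normSq_ofReal, hcross, hn₁, hn₂, ← add_div, div_eq_one_iff_eq hd0]
  linear_combination (2 - 2 * (u₁ * conj u₂).re) * hξ

theorem abs_one_sub_two_mul_sq_eq_sqrt {x y : ℝ} (h : x ^ 2 + y ^ 2 = 1) :
    |1 - 2 * x ^ 2| = √(1 - (2 * x * y) ^ 2) := by
  rw [← Real.sqrt_sq_eq_abs]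
  congr 1
  linear_combination 4 * x ^ 2 * h

theorem add_div_mul_sub_div_eq_neg_one {J Δ Ω : ℝ} (hJ : J ≠ 0) (hΩ : Ω ^ 2 = J ^ 2 + Δ ^ 2) :
    (Δ + Ω) / J * ((Δ - Ω) / J) = -1 := by
  field_simp
  linear_combination -hΩ

theorem norm_exp_neg_I_mul_ofReal (x : ℝ) : ‖exp (-I * x)‖ = 1 := by
  rw [neg_mul, mul_comm, ← neg_mul, ← ofReal_neg, norm_exp_ofReal_mul_I]

theorem stmt_10_general (ωb J1 t : ℝ) (hJ1 : J1 ≠ 0)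
    (Δ Ω e1 e2 ξ1 ξ2 p : ℝ) (α β : ℂ)
    (hΩ : Ω = Real.sqrt (J1 ^ 2 + Δ ^ 2))
    (hξ1 : ξ1 = (Δ + Ω) / J1) (hξ2 : ξ2 = (Δ - Ω) / J1)
    (hα : α = (Complex.exp (-Complex.I * ((e1 * t : ℝ) : ℂ)) * (ξ1 : ℂ) -
        Complex.exp (-Complex.I * ((e2 * t : ℝ) : ℂ)) * (ξ2 : ℂ)) / ((ξ1 : ℂ) - (ξ2 : ℂ)))
    (hβ : β = (Complex.exp (-Complex.I * ((e1 * t : ℝ) : ℂ)) -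
        Complex.exp (-Complex.I * ((e2 * t : ℝ) : ℂ))) / ((ξ1 : ℂ) - (ξ2 : ℂ)))
    (hp : p = ‖α‖ ^ 2)
    (ρ : Matrix (Fin 4) (Fin 4) ℂ)
    (hρ : ρ = Matrix.of fun i j => ![0, α, β, 0] i * star (![0, α, β, 0] j))
    (E Cb C1 : ℝ)
    (hE : E = 2 * ‖α‖ * ‖β‖)
    (hCb : Cb = 2 * ωb * |1 - 2 * p|)
    (hC1 : C1 = ∑ i : Fin 4, ∑ j : Fin 4, if i ≠ j then ‖ρ i j‖ else 0) :
    C1 = 2 * ‖α‖ * ‖β‖ ∧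
    C1 = E ∧
    Cb = 2 * ωb * Real.sqrt (1 - C1 ^ 2) := by
  have hΩpos : 0 < Ω := hΩ ▸ Real.sqrt_pos.2 (by positivity)
  have hξ : ξ1 * ξ2 = -1 := hξ1 ▸ hξ2 ▸
    add_div_mul_sub_div_eq_neg_one hJ1 (hΩ ▸ Real.sq_sqrt (by positivity))
  have hne : ξ1 ≠ ξ2 := by
    rw [hξ1, hξ2]
    exact fun h => hΩpos.ne' (by linarith [(div_left_inj' hJ1).1 h])
  have hnorm : ‖α‖ ^ 2 + ‖β‖ ^ 2 = 1 := hα ▸ hβ ▸ norm_sq_add_norm_sq_of_mul_eq_neg_one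
    (norm_exp_neg_I_mul_ofReal _) (norm_exp_neg_I_mul_ofReal _) hξ hne
  have hC1α : C1 = 2 * ‖α‖ * ‖β‖ := hC1 ▸ hρ ▸ l1Coherence_singleExcitation α β
  refine ⟨hC1α, hC1α.trans hE.symm, ?_⟩
  rw [hCb, hC1α, hp, abs_one_sub_two_mul_sq_eq_sqrt hnorm]

theorem stmt_10 (ωb ωc J1 J2 t : ℝ) (hωb : 0 < ωb) (hωc : 0 < ωc) (hJ1 : J1 ≠ 0)
    (Δ Ω e1 e2 ξ1 ξ2 p : ℝ) (α β : ℂ)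
    (hΔ : Δ = ωb - ωc) (hΩ : Ω = Real.sqrt (J1 ^ 2 + Δ ^ 2))
    (he1 : e1 = Ω - J2) (he2 : e2 = -Ω - J2)
    (hξ1 : ξ1 = (Δ + Ω) / J1) (hξ2 : ξ2 = (Δ - Ω) / J1)
    (hα : α = (Complex.exp (-Complex.I * ((e1 * t : ℝ) : ℂ)) * (ξ1 : ℂ) -
        Complex.exp (-Complex.I * ((e2 * t : ℝ) : ℂ)) * (ξ2 : ℂ)) / ((ξ1 : ℂ) - (ξ2 : ℂ)))
    (hβ : β = (Complex.exp (-Complex.I * ((e1 * t : ℝ) : ℂ)) -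
        Complex.exp (-Complex.I * ((e2 * t : ℝ) : ℂ))) / ((ξ1 : ℂ) - (ξ2 : ℂ)))
    (hp : p = ‖α‖ ^ 2)
    (ρ : Matrix (Fin 4) (Fin 4) ℂ)
    (hρ : ρ = Matrix.of fun i j => ![0, α, β, 0] i * star (![0, α, β, 0] j))
    (E Cb C1 : ℝ)
    (hE : E = 2 * ‖α‖ * ‖β‖)
    (hCb : Cb = 2 * ωb * |1 - 2 * p|)
    (hC1 : C1 = ∑ i : Fin 4, ∑ j : Fin 4, if i ≠ j then ‖ρ i j‖ else 0) :
    C1 = 2 * ‖α‖ * ‖β‖ ∧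
    C1 = E ∧
    Cb = 2 * ωb * Real.sqrt (1 - C1 ^ 2) :=
  stmt_10_general ωb J1 t hJ1 Δ Ω e1 e2 ξ1 ξ2 p α β hΩ hξ1 hξ2 hα hβ hp ρ hρ E Cb C1 hE hCb hC1
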